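/- arXiv:cs/0510014 — 5 statements merged into one kernel-verified Lean document; each statement's English description precedes it below -/
import Mathlib

section
/- Let V be an n×r matrix whose columns form a basis of the A-invariant subspace W = Span(B, AB, ..., A^(n-1)B), and let T = [V | W'] be any invertible n×n matrix extending V to a basis of F^n. Then T⁻¹AT = [[H, X],[0, Y]] for some H ∈ M_r(F), and T⁻¹B = [[B₁],[0]] for some B₁ ∈ M_{r×m}(F). -/
/-!
By Cayley–Hamilton, `A ^ n` is a combination of `1, A, …, A ^ (n - 1)`, so the controllable
subspace `W` is `A`-invariant and contains the columns of `B`. Since `T⁻¹ * T = 1`, `T⁻¹` sends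
the span of the first `r` columns of `T`, which is `W`, to vectors whose last `n - r`
coordinates vanish; apply this to the columns `A * Tⱼ` (`j < r`) and to the columns of `B`.
-/

open Matrix Submodule

section

variable {R : Type*} [CommRing R] {ι κ : Type*} [Fintype ι] [DecidableEq ι]

def controllableSubspace (A : Matrix ι ι R) (B : Matrix ι κ R) : Submodule R (ι → R) :=
  span R {x | ∃ k < Fintype.card ι, ∃ j : κ, x = (A ^ k) *ᵥ B.col j}

theorem pow_card_mulVec_mem [Nontrivial R] (A : Matrix ι ι R) (b : ι → R)
    {S : Submodule R (ι → R)} (hS : ∀ k < Fintype.card ι, (A ^ k) *ᵥ b ∈ S) :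
    (A ^ Fintype.card ι) *ᵥ b ∈ S := by
  have hχ : A.charpoly.natDegree = Fintype.card ι := A.charpoly_natDegree_eq_dim
  have hCH := A.aeval_self_charpoly
  rw [Polynomial.aeval_eq_sum_range, hχ, Finset.sum_range_succ, ← hχ,
    A.charpoly_monic.coeff_natDegree, one_smul, hχ, add_eq_zero_iff_eq_neg'] at hCH
  rw [hCH, neg_mulVec, sum_mulVec]
  exact neg_mem <| sum_mem fun k hk => by
    rw [smul_mulVec]; exact smul_mem _ _ (hS k (Finset.mem_range.mp hk))

theorem mulVec_mem_controllableSubspace [Nontrivial R] {A : Matrix ι ι R} {B : Matrix ι κ R}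
    {x : ι → R} (hx : x ∈ controllableSubspace A B) : A *ᵥ x ∈ controllableSubspace A B := by
  have hgen : ∀ k < Fintype.card ι, ∀ j, (A ^ k) *ᵥ B.col j ∈ controllableSubspace A B :=
    fun k hk j => subset_span ⟨k, hk, j, rfl⟩
  suffices h : controllableSubspace A B ≤ (controllableSubspace A B).comap A.mulVecLin from h hx
  refine span_le.mpr ?_
  rintro _ ⟨k, hk, j, rfl⟩
  change A *ᵥ (A ^ k *ᵥ B.col j) ∈ controllableSubspace A B
  rw [mulVec_mulVec, ← pow_succ']
  rcases (show k + 1 ≤ Fintype.card ι from hk).lt_or_eq with hlt | heq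
  · exact hgen _ hlt j
  · rw [heq]; exact pow_card_mulVec_mem A _ fun k hk => hgen k hk j

theorem col_mem_controllableSubspace [Nonempty ι] (A : Matrix ι ι R) (B : Matrix ι κ R) (j : κ) :
    B.col j ∈ controllableSubspace A B :=
  subset_span ⟨0, Fintype.card_pos, j, by rw [pow_zero, one_mulVec]⟩

theorem inv_mulVec_apply_eq_zero_of_mem_span_col {T : Matrix ι ι R} (hT : IsUnit T.det)
    {s : Set ι} {v : ι → R} (hv : v ∈ span R (T.col '' s)) {i : ι} (hi : i ∉ s) :
    (T⁻¹ *ᵥ v) i = 0 := by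
  suffices h : span R (T.col '' s) ≤ (LinearMap.proj i ∘ₗ T⁻¹.mulVecLin).ker from h hv
  refine span_le.mpr ?_
  rintro _ ⟨j, hj, rfl⟩
  have hij : i ≠ j := by rintro rfl; exact hi hj
  change (T⁻¹ *ᵥ T.col j) i = 0
  rw [← mulVec_single_one, mulVec_mulVec, nonsing_inv_mul T hT, one_mulVec, Pi.single_apply,
    if_neg hij]

end

theorem stmt5_general {F : Type*} [Field F] {n m r : ℕ} (A : Matrix (Fin n) (Fin n) F)
    (B : Matrix (Fin n) (Fin m) F)
    (V : Matrix (Fin n) (Fin r) F)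
    (hspan : span F (Set.range fun j : Fin r => fun i => V i j) =
      span F {x | ∃ k < n, ∃ j : Fin m, x = (A ^ k) *ᵥ (fun i => B i j)})
    (T : Matrix (Fin n) (Fin n) F) (hT : IsUnit T.det)
    (hTV : ∀ (i : Fin n) (j : Fin n) (hj : (j : ℕ) < r), T i j = V i ⟨(j : ℕ), hj⟩) :
    (∀ i j : Fin n, r ≤ (i : ℕ) → (j : ℕ) < r → (T⁻¹ * A * T) i j = 0) ∧
    (∀ (i : Fin n) (j : Fin m), r ≤ (i : ℕ) → (T⁻¹ * B) i j = 0) := by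
  have hW : controllableSubspace A B = span F (Set.range V.col) := by
    rw [controllableSubspace, Fintype.card_fin]; exact hspan.symm
  have hlower : ∀ v ∈ controllableSubspace A B, ∀ i : Fin n, r ≤ (i : ℕ) → (T⁻¹ *ᵥ v) i = 0 := by
    intro v hv i hi
    refine inv_mulVec_apply_eq_zero_of_mem_span_col hT (s := {j | (j : ℕ) < r}) ?_ hi.not_gt
    refine span_mono ?_ (hW ▸ hv)
    rintro _ ⟨j, rfl⟩
    have hjn : (j : ℕ) < n := j.2.trans_le (hi.trans i.2.le)
    exact ⟨⟨j, hjn⟩, j.2, funext fun k => hTV k ⟨j, hjn⟩ j.2⟩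
  constructor
  · intro i j hi hj
    have hTj : T.col j ∈ controllableSubspace A B :=
      hW ▸ subset_span ⟨⟨j, hj⟩, funext fun k => (hTV k j hj).symm⟩
    change ((T⁻¹ * A) *ᵥ T.col j) i = 0
    rw [← mulVec_mulVec]
    exact hlower _ (mulVec_mem_controllableSubspace hTj) i hi
  · intro i j hi
    have : Nonempty (Fin n) := ⟨i⟩
    exact hlower _ (col_mem_controllableSubspace A B j) i hi

/-- If the first `r` columns of an invertible matrix `T` form a basis of the controllable
subspace `W = Span(B, AB, ..., A^(n-1)B)`, then `T⁻¹AT` is block upper triangular with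
an `r×r` leading block and the last `n-r` rows of `T⁻¹B` vanish. -/
theorem stmt5 {F : Type*} [Field F] {n m r : ℕ} (A : Matrix (Fin n) (Fin n) F)
    (B : Matrix (Fin n) (Fin m) F)
    (V : Matrix (Fin n) (Fin r) F)
    (hspan : span F (Set.range fun j : Fin r => fun i => V i j) =
      span F {x | ∃ k < n, ∃ j : Fin m, x = (A ^ k) *ᵥ (fun i => B i j)})
    (hVind : LinearIndependent F (fun j : Fin r => fun i => V i j))
    (T : Matrix (Fin n) (Fin n) F) (hT : IsUnit T.det)
    (hTV : ∀ (i : Fin n) (j : Fin n) (hj : (j : ℕ) < r), T i j = V i ⟨(j : ℕ), hj⟩) :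
    (∀ i j : Fin n, r ≤ (i : ℕ) → (j : ℕ) < r → (T⁻¹ * A * T) i j = 0) ∧
    (∀ (i : Fin n) (j : Fin m), r ≤ (i : ℕ) → (T⁻¹ * B) i j = 0) :=
  stmt5_general A B V hspan T hT hTV
end

section
/- Let V be an n×r matrix of rank r, and suppose Vᵀ = L[U₁ U₂]P is an LUP factorization with L ∈ GL_r(F) lower triangular, U₁ ∈ GL_r(F) upper triangular, U₂ ∈ M_{r×(n−r)}(F), and P a permutation matrix. Then the n×n matrix T = [ V | Pᵀ·[0; I_{n−r}] ] is invertible. -/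
open Matrix

/-- The matrix factors as `P * fromBlocks A 0 B 1`, which is block lower triangular. -/
theorem isUnit_det_fromCols_mul_fromRows_zero_one {R m n : Type*} [CommRing R]
    [Fintype m] [Fintype n] [DecidableEq m] [DecidableEq n]
    (P : Matrix (m ⊕ n) (m ⊕ n) R) (A : Matrix m m R) (B : Matrix n m R)
    (hP : IsUnit P.det) (hA : IsUnit A.det) :
    IsUnit (fromCols (P * fromRows A B)
      (P * fromRows (0 : Matrix m n R) (1 : Matrix n n R))).det := by
  rw [← mul_fromCols, fromCols_fromRows_eq_fromBlocks, det_mul, det_fromBlocks_zero₁₂,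
    det_one, mul_one]
  exact hP.mul hA

theorem stmt11_general {F : Type*} [Field F] {r s : ℕ}
    (V : Matrix (Fin r ⊕ Fin s) (Fin r) F)
    (L U₁ : Matrix (Fin r) (Fin r) F) (U₂ : Matrix (Fin r) (Fin s) F)
    (σ : Equiv.Perm (Fin r ⊕ Fin s))
    (hL : IsUnit L.det) (hU₁ : IsUnit U₁.det)
    (hfact : Vᵀ = L * Matrix.fromCols U₁ U₂ * σ.permMatrix F) :
    IsUnit (Matrix.fromCols V ((σ.permMatrix F)ᵀ *
      Matrix.fromRows (0 : Matrix (Fin r) (Fin s) F)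
        (1 : Matrix (Fin s) (Fin s) F))).det := by
  have hV : V = (σ.permMatrix F)ᵀ * fromRows (U₁ᵀ * Lᵀ) (U₂ᵀ * Lᵀ) := by
    simpa only [transpose_transpose, transpose_mul, transpose_fromCols, fromRows_mul]
      using congrArg transpose hfact
  have hP : IsUnit (σ.permMatrix F)ᵀ.det := by
    rw [det_transpose, det_permutation]
    exact (Equiv.Perm.sign σ).isUnit.map (Int.castRingHom F)
  have hA : IsUnit (U₁ᵀ * Lᵀ).det := by
    rw [det_mul, det_transpose, det_transpose]
    exact hU₁.mul hL
  rw [hV]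
  exact isUnit_det_fromCols_mul_fromRows_zero_one _ _ _ hP hA

/-- Completing an `n×r` full-column-rank matrix `V` with `Vᵀ = L·[U₁ U₂]·P` into the
invertible matrix `T = [V | Pᵀ·[0; I]]`. -/
theorem stmt11 {F : Type*} [Field F] {r s : ℕ} (hr : 0 < r)
    (V : Matrix (Fin r ⊕ Fin s) (Fin r) F) (hrank : V.rank = r)
    (L U₁ : Matrix (Fin r) (Fin r) F) (U₂ : Matrix (Fin r) (Fin s) F)
    (σ : Equiv.Perm (Fin r ⊕ Fin s))
    (hL : IsUnit L.det) (hU₁ : IsUnit U₁.det)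
    (hLtri : ∀ i j : Fin r, i < j → L i j = 0)
    (hUtri : ∀ i j : Fin r, j < i → U₁ i j = 0)
    (hfact : Vᵀ = L * Matrix.fromCols U₁ U₂ * σ.permMatrix F) :
    IsUnit (Matrix.fromCols V ((σ.permMatrix F)ᵀ *
      Matrix.fromRows (0 : Matrix (Fin r) (Fin s) F)
        (1 : Matrix (Fin s) (Fin s) F))).det :=
  stmt11_general V L U₁ U₂ σ hL hU₁ hfact
end

section
/- (Correctness of greedy column selection / lexicographic maximality) Let b_1,...,b_m ∈ F^n and A ∈ M_n(F). For the Krylov matrix K = [b_1, Ab_1, ..., A^{n-1}b_1, ..., b_m, ..., A^{n-1}b_m], selecting from left to right each column linearly independent of the previously selected ones yields columns of the form b_1,...,A^{d_1−1}b_1, ..., b_m,...,A^{d_m−1}b_m for some exponents d_i with Σd_i = rank(K); moreover the resulting sequence (d_1,...,d_m) is lexicographically maximal among all sequences (e_1,...,e_m) for which b_1,...,A^{e_1−1}b_1,...,b_m,...,A^{e_m−1}b_m are linearly independent and span the column space of K. -/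
/-!
The span `W` of the greedily selected vectors `A^l b_j` (`l < d_j`) is `A`-invariant: the only
generator whose image is not again a generator is `A^{d_j - 1} b_j ↦ A^{d_j} b_j`, which lies in `W`
by greedy selection. Hence `W` contains every Krylov vector, so it is the column space of `K`,
of dimension `Σ d_j`. If some admissible `e` were lexicographically larger, first exceeding `d` at
`i`, then `A^l b_j` for `j < i, l < e_j = d_j` together with `b_i, …, A^{d_i} b_i` would be
`Σ_{j ≤ i} d_j + 1` independent vectors in the span of the `Σ_{j ≤ i} d_j` greedy vectors with
index `j ≤ i`.
-/

open Matrix Submodule Module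

section Family

variable {F V ι : Type*} (v : ι → ℕ → V)

lemma range_sigma_eq_setOf (c : ι → ℕ) :
    Set.range (fun p : (j : ι) × Fin (c j) => v p.1 p.2) = {x | ∃ j, ∃ l < c j, x = v j l} := by
  ext x
  constructor
  · rintro ⟨⟨j, l⟩, rfl⟩
    exact ⟨j, l, l.isLt, rfl⟩
  · rintro ⟨j, l, hl, rfl⟩
    exact ⟨⟨j, ⟨l, hl⟩⟩, rfl⟩

variable [Field F] [AddCommGroup V] [Module F V] {v}

lemma LinearIndependent.sigma_fin_of_le {c e : ι → ℕ} (hce : c ≤ e)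
    (he : LinearIndependent F (fun p : (j : ι) × Fin (e j) => v p.1 p.2)) :
    LinearIndependent F (fun p : (j : ι) × Fin (c j) => v p.1 p.2) :=
  he.comp (fun p : (j : ι) × Fin (c j) => ⟨p.1, Fin.castLE (hce p.1) p.2⟩) fun p q h => by
    obtain ⟨j, l⟩ := p
    obtain ⟨j', l'⟩ := q
    simp only [Sigma.mk.injEq] at h
    obtain ⟨rfl, h⟩ := h
    simpa [Fin.castLE_inj] using h

variable [Fintype ι]

variable (v) in
lemma finrank_span_setOf_le_sum (c : ι → ℕ) :
    finrank F (span F {x | ∃ j, ∃ l < c j, x = v j l}) ≤ ∑ j, c j := by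
  rw [← range_sigma_eq_setOf]
  exact (finrank_range_le_card (R := F) _).trans_eq (by simp [Fintype.card_sigma])

lemma finrank_span_setOf_eq_sum {c : ι → ℕ}
    (hc : LinearIndependent F (fun p : (j : ι) × Fin (c j) => v p.1 p.2)) :
    finrank F (span F {x | ∃ j, ∃ l < c j, x = v j l}) = ∑ j, c j := by
  rw [← range_sigma_eq_setOf, finrank_span_eq_card hc]
  simp [Fintype.card_sigma]

lemma sum_le_finrank_of_linearIndependent [FiniteDimensional F V] {c : ι → ℕ}
    (hc : LinearIndependent F (fun p : (j : ι) × Fin (c j) => v p.1 p.2)) :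
    ∑ j, c j ≤ finrank F V := by
  simpa [Fintype.card_sigma] using hc.fintype_card_le_finrank

lemma sum_le_sum_of_linearIndependent_of_subset_span {c c' : ι → ℕ}
    (hc : LinearIndependent F (fun p : (j : ι) × Fin (c j) => v p.1 p.2))
    (hsub : {x | ∃ j, ∃ l < c j, x = v j l} ⊆ span F {x | ∃ j, ∃ l < c' j, x = v j l}) :
    ∑ j, c j ≤ ∑ j, c' j := by
  have : FiniteDimensional F (span F {x | ∃ j, ∃ l < c' j, x = v j l}) := by
    rw [← range_sigma_eq_setOf]
    exact FiniteDimensional.span_of_finite F (Set.finite_range _)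
  calc ∑ j, c j = finrank F (span F {x | ∃ j, ∃ l < c j, x = v j l}) :=
        (finrank_span_setOf_eq_sum hc).symm
    _ ≤ finrank F (span F {x | ∃ j, ∃ l < c' j, x = v j l}) := finrank_mono (span_le.2 hsub)
    _ ≤ ∑ j, c' j := finrank_span_setOf_le_sum v c'

end Family

section Greedy

variable {F V ι : Type*} [Field F] [AddCommGroup V] [Module F V] [LinearOrder ι]
  {v : ι → ℕ → V} {d : ι → ℕ}
  (hgreedy : ∀ i, v i (d i) ∈ span F {x | ∃ j ≤ i, ∃ l < d j, x = v j l})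
include hgreedy

lemma self_mem_span_of_greedy (i : ι) : v i (d i) ∈ span F {x | ∃ j, ∃ l < d j, x = v j l} :=
  span_mono (by rintro _ ⟨j, -, hx⟩; exact ⟨j, hx⟩) (hgreedy i)

lemma span_le_comap_of_greedy {f : V →ₗ[F] V} (hv : ∀ j l, v j (l + 1) = f (v j l)) :
    span F {x | ∃ j, ∃ l < d j, x = v j l} ≤ (span F {x | ∃ j, ∃ l < d j, x = v j l}).comap f := by
  refine span_le.2 ?_
  rintro _ ⟨j, l, hl, rfl⟩
  rw [SetLike.mem_coe, mem_comap, ← hv]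
  rcases (show l + 1 ≤ d j from hl).lt_or_eq with hlt | heq
  · exact subset_span ⟨j, l + 1, hlt, rfl⟩
  · exact heq ▸ self_mem_span_of_greedy hgreedy j

lemma mem_span_of_greedy {f : V →ₗ[F] V} (hv : ∀ j l, v j (l + 1) = f (v j l))
    (j : ι) (l : ℕ) : v j l ∈ span F {x | ∃ j, ∃ l < d j, x = v j l} := by
  rcases lt_or_ge l (d j) with hl | hl
  · exact subset_span ⟨j, l, hl, rfl⟩
  induction l, hl using Nat.le_induction with
  | base => exact self_mem_span_of_greedy hgreedy j
  | succ l _ ih => rw [hv]; exact span_le_comap_of_greedy hgreedy hv ih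

lemma span_setOf_eq_of_greedy {f : V →ₗ[F] V} (hv : ∀ j l, v j (l + 1) = f (v j l))
    {N : ℕ} (hN : ∀ j, d j ≤ N) :
    span F {x | ∃ j, ∃ l < N, x = v j l} = span F {x | ∃ j, ∃ l < d j, x = v j l} :=
  le_antisymm (span_le.2 fun _ ⟨j, l, _, hx⟩ => hx ▸ mem_span_of_greedy hgreedy hv j l)
    (span_mono fun _ ⟨j, l, hl, hx⟩ => ⟨j, l, hl.trans_le (hN j), hx⟩)

lemma toLex_le_of_greedy [Fintype ι] {e : ι → ℕ}
    (he : LinearIndependent F (fun p : (j : ι) × Fin (e j) => v p.1 p.2)) :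
    toLex e ≤ toLex d := by
  by_contra hlt
  obtain ⟨i, hdei, hdi⟩ : ∃ i, (∀ j < i, d j = e j) ∧ d i < e i := not_le.1 hlt
  set d' : ι → ℕ := fun j => if j ≤ i then d j else 0
  set c : ι → ℕ := d' + Pi.single i 1
  have hce : c ≤ e := by
    intro j
    rcases lt_trichotomy j i with hj | rfl | hj
    · simp [c, d', hj.le, hj.ne, hdei j hj]
    · simpa [c, d'] using hdi
    · simp [c, d', hj.not_ge, hj.ne']
  have hsub : {x | ∃ j, ∃ l < c j, x = v j l} ⊆ span F {x | ∃ j, ∃ l < d' j, x = v j l} := by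
    rintro _ ⟨j, l, hl, rfl⟩
    have hd'_le : {x | ∃ j ≤ i, ∃ l < d j, x = v j l} ⊆ {x | ∃ j, ∃ l < d' j, x = v j l} :=
      fun _ ⟨j, hj, l, hl, hx⟩ => ⟨j, l, by simpa [d', hj] using hl, hx⟩
    rcases eq_or_ne j i with rfl | hj
    · rcases Nat.lt_succ_iff_lt_or_eq.1 (by simpa [c, d'] using hl) with hl | rfl
      · exact subset_span ⟨j, l, by simpa [d'] using hl, rfl⟩
      · exact span_mono hd'_le (hgreedy j)
    · exact subset_span ⟨j, l, by simpa [c, hj] using hl, rfl⟩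
  have := sum_le_sum_of_linearIndependent_of_subset_span (he.sigma_fin_of_le hce) hsub
  simp [c, Finset.sum_add_distrib] at this

end Greedy

/-- Correctness of greedy left-to-right column selection in the Krylov matrix: the
selected exponents `d` satisfy `Σ d_i = rank K`, and `(d_1, ..., d_m)` is
lexicographically maximal among all exponent sequences `e` whose associated columns are
linearly independent and span the column space of `K`. -/
theorem stmt14 {F : Type*} [Field F] {n m : ℕ} (A : Matrix (Fin n) (Fin n) F)
    (b : Fin m → Fin n → F) (d : Fin m → ℕ)
    (hind : LinearIndependent F
      (fun p : (j : Fin m) × Fin (d j) => (A ^ ((p.2 : ℕ))) *ᵥ b p.1))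
    (hgreedy : ∀ i : Fin m, (A ^ (d i)) *ᵥ b i ∈
      span F {x | ∃ j ≤ i, ∃ l < d j, x = (A ^ l) *ᵥ b j}) :
    (∑ j, d j) = Module.finrank F
      (span F {x | ∃ j : Fin m, ∃ l < n, x = (A ^ l) *ᵥ b j}) ∧
    ∀ e : Fin m → ℕ,
      LinearIndependent F
        (fun p : (j : Fin m) × Fin (e j) => (A ^ ((p.2 : ℕ))) *ᵥ b p.1) →
      span F {x | ∃ j : Fin m, ∃ l < e j, x = (A ^ l) *ᵥ b j} =
        span F {x | ∃ j : Fin m, ∃ l < n, x = (A ^ l) *ᵥ b j} →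
      toLex e ≤ toLex d := by
  let v : Fin m → ℕ → Fin n → F := fun j l => (A ^ l) *ᵥ b j
  have hv : ∀ j l, v j (l + 1) = A.mulVecLin (v j l) := fun j l => by
    simp [v, pow_succ', mulVec_mulVec]
  have hdn : ∀ j, d j ≤ n := fun j =>
    (Finset.single_le_sum (fun j _ => Nat.zero_le (d j)) (Finset.mem_univ j)).trans
      (by simpa using sum_le_finrank_of_linearIndependent (v := v) hind)
  refine ⟨?_, fun e he _ => toLex_le_of_greedy (v := v) hgreedy he⟩
  rw [span_setOf_eq_of_greedy (v := v) hgreedy hv hdn]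
  exact (finrank_span_setOf_eq_sum (v := v) hind).symm
end

section
/- Let A ∈ M_n(F), B ∈ M_{n×m}(F), with Kalman decomposition T⁻¹AT = [[H,X],[0,Y]] and T⁻¹B = [[B₁],[0]], H of size r×r where r = dim Span(B,...,A^{n-1}B). Then the pair (H, B₁) is controllable, i.e., Span(B₁, HB₁, ..., H^{r-1}B₁) = F^r. -/
/-!
The Kalman decomposition says that `A T P = T P H` and `B = T P B₁`, where `P = [[1], [0]]`
embeds `F^r` as the first `r` coordinates. Hence the injective map `v ↦ T P v` carries the
Krylov span of `(H, B₁)` onto that of `(A, B)`, so the former has dimension `r` and fills `F^r`.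
By Cayley–Hamilton the powers `H^k` with `k ≥ r` add nothing to it.
-/

open Matrix Submodule Polynomial

namespace Matrix

variable {R : Type*} [CommRing R] {n n' ι : Type*} [Fintype n] [Fintype n']
  [DecidableEq n']

theorem mulVec_injective_of_mul_eq_one {L : Matrix n' n R} {T : Matrix n n' R} (h : L * T = 1) :
    Function.Injective T.mulVec :=
  Function.LeftInverse.injective (g := L.mulVec) fun v => by rw [mulVec_mulVec, h, one_mulVec]

variable [DecidableEq n]

def krylovSpan (A : Matrix n n R) (B : Matrix n ι R) (N : ℕ) : Submodule R (n → R) :=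
  span R {x | ∃ k < N, ∃ j, x = (A ^ k) *ᵥ B.col j}

theorem krylovSpan_mono (A : Matrix n n R) (B : Matrix n ι R) {N N' : ℕ} (h : N ≤ N') :
    A.krylovSpan B N ≤ A.krylovSpan B N' :=
  span_mono fun _ ⟨k, hk, j, hx⟩ => ⟨k, hk.trans_le h, j, hx⟩

theorem pow_mulVec_col_mem_krylovSpan_card [Nontrivial R] (A : Matrix n n R)
    (B : Matrix n ι R) (k : ℕ) (j : ι) :
    (A ^ k) *ᵥ B.col j ∈ A.krylovSpan B (Fintype.card n) := by
  rw [pow_eq_aeval_mod_charpoly]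
  by_cases h1 : A.charpoly = 1
  · simp [h1]
  have hdeg : (X ^ k %ₘ A.charpoly).natDegree < Fintype.card n :=
    A.charpoly_natDegree_eq_dim ▸ natDegree_modByMonic_lt _ A.charpoly_monic h1
  rw [aeval_eq_sum_range' hdeg, sum_mulVec]
  refine sum_mem fun i hi => ?_
  rw [smul_mulVec]
  exact smul_mem _ _ (subset_span ⟨i, Finset.mem_range.1 hi, j, rfl⟩)

theorem krylovSpan_eq_of_card_le [Nontrivial R] (A : Matrix n n R) (B : Matrix n ι R) {N : ℕ}
    (hN : Fintype.card n ≤ N) : A.krylovSpan B N = A.krylovSpan B (Fintype.card n) :=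
  le_antisymm
    (span_le.2 fun _ ⟨k, _, j, hx⟩ => hx ▸ pow_mulVec_col_mem_krylovSpan_card A B k j)
    (krylovSpan_mono A B hN)

theorem pow_mul_eq_mul_pow {A : Matrix n n R} {M : Matrix n' n' R} {T : Matrix n n' R}
    (h : A * T = T * M) (k : ℕ) : A ^ k * T = T * M ^ k := by
  induction k with
  | zero => simp
  | succ k ih =>
    rw [pow_succ, Matrix.mul_assoc, h, ← Matrix.mul_assoc, ih, Matrix.mul_assoc, ← pow_succ]

theorem map_krylovSpan {A : Matrix n n R} {M : Matrix n' n' R} {T : Matrix n n' R}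
    {B : Matrix n ι R} {C : Matrix n' ι R} (hA : A * T = T * M) (hB : B = T * C) (N : ℕ) :
    (M.krylovSpan C N).map T.mulVecLin = A.krylovSpan B N := by
  have hcol : ∀ k j, T.mulVecLin ((M ^ k) *ᵥ C.col j) = (A ^ k) *ᵥ B.col j := fun k j => by
    rw [mulVecLin_apply, hB, mulVec_mulVec, ← pow_mul_eq_mul_pow hA, ← mulVec_mulVec]
    rfl
  rw [krylovSpan, map_span]
  congr 1
  ext x
  constructor
  · rintro ⟨y, ⟨k, hk, j, rfl⟩, rfl⟩
    exact ⟨k, hk, j, hcol k j⟩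
  · rintro ⟨k, hk, j, rfl⟩
    exact ⟨_, ⟨k, hk, j, rfl⟩, hcol k j⟩

theorem finrank_krylovSpan_of_injective {A : Matrix n n R} {M : Matrix n' n' R}
    {T : Matrix n n' R} {B : Matrix n ι R} {C : Matrix n' ι R} (hA : A * T = T * M)
    (hB : B = T * C) (hT : Function.Injective T.mulVec) (N : ℕ) :
    Module.finrank R (M.krylovSpan C N) = Module.finrank R (A.krylovSpan B N) := by
  rw [← map_krylovSpan hA hB, (equivMapOfInjective T.mulVecLin hT _).finrank_eq]

theorem fromBlocks_zero₂₁_mul_fromRows_one_zero {m : Type*} [Fintype m] [DecidableEq m]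
    (H : Matrix n n R) (X : Matrix n m R) (Y : Matrix m m R) :
    fromBlocks H X 0 Y * fromRows (1 : Matrix n n R) (0 : Matrix m n R) =
      fromRows (1 : Matrix n n R) (0 : Matrix m n R) * H := by
  simp [fromBlocks_mul_fromRows]

end Matrix

/-- The controllable pair extracted by the Kalman decomposition: if
`T⁻¹AT = [[H,X],[0,Y]]` and `T⁻¹B = [[B₁],[0]]` with `r` the dimension of the
controllable subspace of `(A,B)`, then `(H, B₁)` is controllable. -/
theorem stmt15 {F : Type*} [Field F] {r s m : ℕ}
    (A : Matrix (Fin r ⊕ Fin s) (Fin r ⊕ Fin s) F)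
    (B : Matrix (Fin r ⊕ Fin s) (Fin m) F)
    (T : Matrix (Fin r ⊕ Fin s) (Fin r ⊕ Fin s) F) (hT : IsUnit T.det)
    (H : Matrix (Fin r) (Fin r) F) (X : Matrix (Fin r) (Fin s) F)
    (Y : Matrix (Fin s) (Fin s) F) (B₁ : Matrix (Fin r) (Fin m) F)
    (hA : T⁻¹ * A * T = Matrix.fromBlocks H X 0 Y)
    (hB : T⁻¹ * B = Matrix.fromRows B₁ 0)
    (hr : Module.finrank F
      (span F {x | ∃ k < r + s, ∃ j : Fin m, x = (A ^ k) *ᵥ (fun i => B i j)}) = r) :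
    span F {x | ∃ k < r, ∃ j : Fin m, x = (H ^ k) *ᵥ (fun i => B₁ i j)} = ⊤ := by
  set P : Matrix (Fin r ⊕ Fin s) (Fin r) F := fromRows 1 0
  have hTT : T * T⁻¹ = 1 := mul_nonsing_inv T hT
  have hAP : A * (T * P) = T * P * H :=
    calc A * (T * P) = T * (T⁻¹ * A * T) * P := by
          simp only [← Matrix.mul_assoc, hTT, Matrix.one_mul]
      _ = T * P * H := by
          rw [hA, Matrix.mul_assoc, fromBlocks_zero₂₁_mul_fromRows_one_zero,
            ← Matrix.mul_assoc]
  have hBP : B = T * P * B₁ :=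
    calc B = T * (T⁻¹ * B) := by rw [← Matrix.mul_assoc, hTT, Matrix.one_mul]
      _ = T * P * B₁ := by
          rw [hB, Matrix.mul_assoc, fromRows_mul, Matrix.one_mul, Matrix.zero_mul]
  have hPinv : (fromCols 1 0 : Matrix (Fin r) (Fin r ⊕ Fin s) F) * T⁻¹ * (T * P) = 1 := by
    rw [Matrix.mul_assoc, ← Matrix.mul_assoc T⁻¹, nonsing_inv_mul T hT, Matrix.one_mul,
      fromCols_mul_fromRows, Matrix.one_mul, Matrix.zero_mul, add_zero]
  have hinj : Function.Injective (T * P).mulVec := mulVec_injective_of_mul_eq_one hPinv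
  have hfull : H.krylovSpan B₁ (r + s) = ⊤ := by
    apply eq_top_of_finrank_eq
    rw [finrank_krylovSpan_of_injective hAP hBP hinj]
    exact hr.trans (Module.finrank_fin_fun F).symm
  have hstable := H.krylovSpan_eq_of_card_le B₁ (N := r + s) (by simp)
  rw [Fintype.card_fin] at hstable
  show H.krylovSpan B₁ r = ⊤
  rw [← hstable, hfull]
end

section
/- Let A ∈ M_n(F) and v ∈ F^n with Krylov matrix K = [v|Av|...|A^n v] (n+1 columns), where the first n columns are linearly independent. Suppose Kᵀ admits a factorization Kᵀ = L·U·P' appropriately (LUP of the (n+1)×n matrix Kᵀ) with L unit lower triangular of size (n+1)×(n+1) in the relevant sense. Writing A^n v = Σ_{i=0}^{n-1} m_i A^i v, the last row of the 'L' factor satisfies L_{n+1} = (m_0,...,m_{n-1})·L_{1..n}, so the coefficients m_i are recovered by solving the triangular system (m_0,...,m_{n-1}) = L_{n+1}·(L_{1..n})⁻¹. -/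
open Matrix

theorem Matrix.isUnit_mul_permMatrix {ι R : Type*} [Fintype ι] [DecidableEq ι] [CommRing R]
    {U : Matrix ι ι R} (hU : IsUnit U.det) (σ : Equiv.Perm ι) :
    IsUnit (U * σ.permMatrix R) := by
  rw [isUnit_iff_isUnit_det, det_mul, det_permutation]
  exact hU.mul ((σ.sign).isUnit.map (Int.castRingHom R))

theorem Matrix.eq_vecMul_of_eq_mul_of_vecMul_eq {ι κ R : Type*} [Fintype ι] [Fintype κ]
    [DecidableEq κ] [CommRing R] {K L : Matrix ι κ R} {B : Matrix κ κ R} (hB : IsUnit B) (hK : K = L * B)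
    {m : ι → R} {ℓ : κ → R} (hℓ : m ᵥ* K = ℓ ᵥ* B) : ℓ = m ᵥ* L :=
  vecMul_injective_of_isUnit hB <| by
    simp only [← hℓ, hK, vecMul_vecMul]

theorem stmt16_general {F : Type*} [Field F] {n : ℕ} (A : Matrix (Fin n) (Fin n) F)
    (v : Fin n → F)
    (m : Fin n → F)
    (hm : (A ^ n) *ᵥ v = ∑ i : Fin n, m i • ((A ^ (i : ℕ)) *ᵥ v))
    (U : Matrix (Fin n) (Fin n) F) (hU : IsUnit U.det)
    (σ : Equiv.Perm (Fin n))
    (Ltop : Matrix (Fin n) (Fin n) F)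
    (Lrow : Fin n → F)
    (h1 : (fun (i j : Fin n) => ((A ^ (i : ℕ)) *ᵥ v) j) = Ltop * U * σ.permMatrix F)
    (h2 : (fun j => ((A ^ n) *ᵥ v) j) = Matrix.vecMul Lrow (U * σ.permMatrix F)) :
    Lrow = Matrix.vecMul m Ltop := by
  have hcomb : m ᵥ* Matrix.of (fun i : Fin n => A ^ (i : ℕ) *ᵥ v) = A ^ n *ᵥ v :=
    (vecMul_eq_sum _ _).trans hm.symm
  exact eq_vecMul_of_eq_mul_of_vecMul_eq (isUnit_mul_permMatrix hU σ)
    (h1.trans (Matrix.mul_assoc _ _ _)) (hcomb.trans h2)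

/-- Recovery of the minimal polynomial coefficients from the `L` factor of the LUP
factorization of the transposed Krylov matrix: if `(Kᵀ)_{1..n} = L_{1..n}·U·P` and
`(Kᵀ)_{n+1} = L_{n+1}·U·P` with `A^n v = Σ m_i A^i v`, then
`L_{n+1} = (m_0,...,m_{n-1})·L_{1..n}`. -/
theorem stmt16 {F : Type*} [Field F] {n : ℕ} (A : Matrix (Fin n) (Fin n) F)
    (v : Fin n → F)
    (hind : LinearIndependent F (fun i : Fin n => (A ^ (i : ℕ)) *ᵥ v))
    (m : Fin n → F)
    (hm : (A ^ n) *ᵥ v = ∑ i : Fin n, m i • ((A ^ (i : ℕ)) *ᵥ v))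
    (L : Matrix (Fin (n + 1)) (Fin (n + 1)) F)
    (hLtri : ∀ i j : Fin (n + 1), i < j → L i j = 0)
    (U : Matrix (Fin n) (Fin n) F) (hU : IsUnit U.det)
    (hUtri : ∀ i j : Fin n, j < i → U i j = 0)
    (σ : Equiv.Perm (Fin n))
    (Ltop : Matrix (Fin n) (Fin n) F)
    (hLtop : Ltop = fun i j => L i.castSucc j.castSucc)
    (Lrow : Fin n → F)
    (hLrow : Lrow = fun j => L (Fin.last n) j.castSucc)
    (h1 : (fun (i j : Fin n) => ((A ^ (i : ℕ)) *ᵥ v) j) = Ltop * U * σ.permMatrix F)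
    (h2 : (fun j => ((A ^ n) *ᵥ v) j) = Matrix.vecMul Lrow (U * σ.permMatrix F)) :
    Lrow = Matrix.vecMul m Ltop :=
  stmt16_general A v m hm U hU σ Ltop Lrow h1 h2
end
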